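/- Let A ⊆ ℕ be a classical normal set and let n, m ∈ ℕ be coprime. Then both the set nA + mA = {n·a + m·b : a, b ∈ A} and the set (nA − mA) ∩ ℕ = {n·a − m·b : a, b ∈ A, n·a > m·b} have asymptotic density 1 in ℕ, i.e., for each of these sets V one has |V ∩ {1,…,N}|/N → 1 as N → ∞. -/

import Mathlib

open Filter

/- `A ⊆ ℕ` is a classical normal set. -/
open scoped Classical in
def ClassicalNormalSet (A : Set ℕ) : Prop :=
  ∀ K : Finset ℕ, K.Nonempty → (∀ k ∈ K, 0 < k) → ∀ B : ℕ → Bool,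
    Tendsto
      (fun n =>
        (((Finset.Icc 1 n).filter (fun m => ∀ k ∈ K, (k + m ∈ A ↔ B k = true))).card : ℝ) / n)
      atTop (nhds ((1 / 2 : ℝ) ^ K.card))

/- `V ⊆ ℕ` has asymptotic density `1`: `|V ∩ {1,…,N}|/N → 1`. -/
open scoped Classical in
def HasDensityOne (V : Set ℕ) : Prop :=
  Tendsto (fun N => (((Finset.Icc 1 N).filter (· ∈ V)).card : ℝ) / N) atTop (nhds 1)

/-!
Two consequences of normality drive the argument: for a finite set `K` of positive shifts, the
`c` with `K + c` disjoint from `A` have density `2 ^ (-#K)`, and `A` meets every arithmetic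
progression infinitely often. Fix a residue class `v ≡ s (mod m)` and pick `α` with `n α ≡ s`.
For `J` elements `a = α + m t` of `A`, a large `v` in that class that is missed by `nA + mA` makes
all `J` numbers `(v - n a) / m` miss `A`; they form a translate `K + c` of a fixed `J`-element set,
and `c` determines `v`. So the missed `v` of the class have upper density at most `2 ^ (-J)` for
every `J`. For `nA - mA` the roles are exchanged: take `b = β + n t ∈ A` and the numbers
`(v + m b) / n`.
-/

open Finset
open scoped Classical

def HasDensityZero (W : Set ℕ) : Prop :=
  Tendsto (fun N => (#{v ∈ Icc 1 N | v ∈ W} : ℝ) / N) atTop (nhds 0)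

theorem hasDensityOne_of_hasDensityZero_compl {V : Set ℕ} (h : HasDensityZero Vᶜ) :
    HasDensityOne V := by
  have hlim : Tendsto (fun N => 1 - (#{v ∈ Icc 1 N | v ∈ Vᶜ} : ℝ) / N) atTop (nhds 1) := by
    simpa using tendsto_const_nhds.sub h
  refine hlim.congr' ?_
  filter_upwards [eventually_ge_atTop 1] with N hN
  have hcard : #{v ∈ Icc 1 N | v ∈ V} + #{v ∈ Icc 1 N | v ∈ Vᶜ} = N := by
    simp only [Set.mem_compl_iff, card_filter_add_card_filter_not, Nat.card_Icc,
      add_tsub_cancel_right]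
  have hcardℝ : (#{v ∈ Icc 1 N | v ∈ V} : ℝ) + #{v ∈ Icc 1 N | v ∈ Vᶜ} = N := by
    exact_mod_cast hcard
  rw [eq_sub_of_add_eq hcardℝ, sub_div, div_self (by positivity)]

theorem HasDensityZero.of_forall_modEq {W : Set ℕ} {q : ℕ} (hq : 0 < q)
    (h : ∀ s < q, HasDensityZero {v | v ∈ W ∧ v ≡ s [MOD q]}) : HasDensityZero W := by
  have hsum : Tendsto (fun N => ∑ s ∈ range q,
      (#{v ∈ Icc 1 N | v ∈ {v | v ∈ W ∧ v ≡ s [MOD q]}} : ℝ) / N) atTop (nhds 0) := by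
    simpa using tendsto_finsetSum (range q) fun s hs => h s (mem_range.1 hs)
  refine squeeze_zero (fun N => by positivity) (fun N => ?_) hsum
  rw [← sum_div]
  gcongr
  rw [card_eq_sum_card_fiberwise (f := (· % q)) (t := range q)
    fun v _ => mem_coe.2 (mem_range.2 (Nat.mod_lt v hq))]
  push_cast
  refine sum_le_sum fun s hs => ?_
  rw [filter_filter]
  gcongr with v
  rintro ⟨hvW, hvs⟩
  exact ⟨hvW, hvs.trans (Nat.mod_eq_of_lt (mem_range.1 hs)).symm⟩

theorem card_filter_Icc_le_of_forall_exists_eq {W S : Set ℕ} [DecidablePred (· ∈ W)]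
    [DecidablePred (· ∈ S)] {g : ℕ → ℕ} {C : ℕ}
    (h : ∀ v ∈ W, C ≤ v → ∃ c ≤ v + C, g c = v ∧ c ∈ S) (N : ℕ) :
    #{v ∈ Icc 1 N | v ∈ W} ≤ #{c ∈ Icc 1 N | c ∈ S} + (2 * C + 1) := by
  have hcover : {v ∈ Icc 1 N | v ∈ W} ⊆ range C ∪ image g {c ∈ range (N + C + 1) | c ∈ S} := by
    intro v hv
    obtain ⟨hvN, hvW⟩ := mem_filter.1 hv
    rcases lt_or_ge v C with hvC | hvC
    · exact mem_union_left _ (mem_range.2 hvC)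
    · obtain ⟨c, hc, rfl, hcS⟩ := h v hvW hvC
      exact mem_union_right _ (mem_image_of_mem g (mem_filter.2 ⟨mem_range.2 (by
        have := (mem_Icc.1 hvN).2; omega), hcS⟩))
  have hrange : {c ∈ range (N + C + 1) | c ∈ S} ⊆
      {c ∈ Icc 1 N | c ∈ S} ∪ (range (N + C + 1) \ Icc 1 N) := by
    intro c hc
    by_cases hcN : c ∈ Icc 1 N
    · exact mem_union_left _ (mem_filter.2 ⟨hcN, (mem_filter.1 hc).2⟩)
    · exact mem_union_right _ (mem_sdiff.2 ⟨(mem_filter.1 hc).1, hcN⟩)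
  have hIcc : Icc 1 N ⊆ range (N + C + 1) := fun c hc => mem_range.2 (by
    have := (mem_Icc.1 hc).2; omega)
  calc #{v ∈ Icc 1 N | v ∈ W}
      ≤ C + #{c ∈ range (N + C + 1) | c ∈ S} :=
        (card_le_card hcover).trans <| (card_union_le _ _).trans <|
          add_le_add (card_range C).le card_image_le
    _ ≤ C + (#{c ∈ Icc 1 N | c ∈ S} + (C + 1)) := by
        gcongr
        refine (card_le_card hrange).trans ((card_union_le _ _).trans ?_)
        rw [card_sdiff_of_subset hIcc, card_range, Nat.card_Icc]
        omega
    _ = #{c ∈ Icc 1 N | c ∈ S} + (2 * C + 1) := by ring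

namespace ClassicalNormalSet

variable {A : Set ℕ}

theorem tendsto_density_avoid (hA : ClassicalNormalSet A) {K : Finset ℕ} (hK : K.Nonempty)
    (hpos : ∀ k ∈ K, 0 < k) :
    Tendsto (fun N => (#{c ∈ Icc 1 N | c ∈ {c | ∀ k ∈ K, k + c ∉ A}} : ℝ) / N) atTop
      (nhds ((1 / 2 : ℝ) ^ #K)) :=
  (hA K hK hpos fun _ => false).congr fun N => by simp

theorem exists_pattern_gt (hA : ClassicalNormalSet A) {K : Finset ℕ} (hK : K.Nonempty)
    (hpos : ∀ k ∈ K, 0 < k) (B : ℕ → Bool) (N : ℕ) :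
    ∃ c, N < c ∧ ∀ k ∈ K, (k + c ∈ A ↔ B k = true) := by
  by_contra hnone
  have hbound : ∀ M, #{c ∈ Icc 1 M | ∀ k ∈ K, (k + c ∈ A ↔ B k = true)} ≤ N := fun M =>
    (card_le_card fun c hc => mem_Icc.2 ⟨(mem_Icc.1 (mem_filter.1 hc).1).1,
      not_lt.1 fun hNc => hnone ⟨c, hNc, (mem_filter.1 hc).2⟩⟩).trans (by simp)
  have hzero : Tendsto (fun M => (#{c ∈ Icc 1 M | ∀ k ∈ K, (k + c ∈ A ↔ B k = true)} : ℝ) / M)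
      atTop (nhds 0) :=
    squeeze_zero (fun M => by positivity)
      (fun M => div_le_div_of_nonneg_right (b := (N : ℝ)) (by exact_mod_cast hbound M)
        M.cast_nonneg)
      (tendsto_const_nhds.div_atTop tendsto_natCast_atTop_atTop)
  exact (pow_pos (by norm_num : (0 : ℝ) < 1 / 2) #K).ne'
    (tendsto_nhds_unique (hA K hK hpos B) hzero)

theorem infinite_setOf_add_mul_mem (hA : ClassicalNormalSet A) (α : ℕ) {q : ℕ} (hq : 0 < q) :
    {t | α + q * t ∈ A}.Infinite := by
  refine Set.infinite_of_forall_exists_gt fun N => ?_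
  obtain ⟨c, hc, hcA⟩ := hA.exists_pattern_gt (K := Icc 1 q) ⟨1, by simp; omega⟩
    (fun k hk => (mem_Icc.1 hk).1) (fun _ => true) (α + q * N)
  obtain ⟨r, rfl⟩ := Nat.exists_eq_add_of_le (by omega : α ≤ c)
  have hdiv := Nat.div_add_mod r q
  have hmod := Nat.mod_lt r hq
  have hk : q - r % q ∈ Icc 1 q := mem_Icc.2 ⟨by omega, by omega⟩
  refine ⟨r / q + 1, ?_, Nat.lt_succ_of_le ?_⟩
  · show α + q * (r / q + 1) ∈ A
    convert (hcA _ hk).2 rfl using 1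
    rw [mul_add]
    omega
  · exact Nat.le_of_lt_succ ((Nat.mul_lt_mul_left hq).1 (by rw [Nat.mul_succ]; omega))

theorem hasDensityZero_of_forall_exists_avoid (hA : ClassicalNormalSet A) {W : Set ℕ}
    (h : ∀ J, ∃ K : Finset ℕ, J ≤ #K ∧ (∀ k ∈ K, 0 < k) ∧ ∃ (g : ℕ → ℕ) (C : ℕ),
      ∀ v ∈ W, C ≤ v → ∃ c ≤ v + C, g c = v ∧ ∀ k ∈ K, k + c ∉ A) :
    HasDensityZero W := by
  refine tendsto_order.2 ⟨fun a ha => .of_forall fun N => ha.trans_le (by positivity),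
    fun ε hε => ?_⟩
  obtain ⟨J, hJ⟩ := exists_pow_lt_of_lt_one hε (by norm_num : (1 / 2 : ℝ) < 1)
  obtain ⟨K, hJK, hpos, g, C, hg⟩ := h (J + 1)
  have hK : K.Nonempty := card_pos.1 (by omega)
  have hbound : ∀ N, (#{v ∈ Icc 1 N | v ∈ W} : ℝ) / N ≤
      (#{c ∈ Icc 1 N | c ∈ {c | ∀ k ∈ K, k + c ∉ A}} : ℝ) / N + (2 * C + 1 : ℕ) / N := by
    intro N
    rw [← add_div]
    gcongr
    exact_mod_cast card_filter_Icc_le_of_forall_exists_eq (S := {c | ∀ k ∈ K, k + c ∉ A}) hg N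
  have hlim := (hA.tendsto_density_avoid hK hpos).add
    ((tendsto_const_nhds (x := ((2 * C + 1 : ℕ) : ℝ))).div_atTop tendsto_natCast_atTop_atTop)
  have hlt : (1 / 2 : ℝ) ^ #K + 0 < ε := by
    rw [add_zero]
    exact (pow_le_pow_of_le_one (by norm_num) (by norm_num) (by omega)).trans_lt hJ
  filter_upwards [hlim.eventually_lt_const hlt] with N hN using (hbound N).trans_lt hN

variable {n m : ℕ}

theorem hasDensityZero_compl_mul_add_mul_modEq (hA : ClassicalNormalSet A) (hn : 0 < n)
    (hm : 0 < m) (hco : n.Coprime m) (s : ℕ) :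
    HasDensityZero {v | (¬∃ a ∈ A, ∃ b ∈ A, v = n * a + m * b) ∧ v ≡ s [MOD m]} := by
  obtain ⟨α, -, hα⟩ := Nat.exists_mul_mod_eq_of_coprime s hco hm.ne'
  refine hA.hasDensityZero_of_forall_exists_avoid fun J => ?_
  obtain ⟨T, hTA, hTcard⟩ := (hA.infinite_setOf_add_mul_mem α hm).exists_subset_card_eq J
  obtain ⟨t₀, ht₀⟩ := T.bddAbove
  refine ⟨T.image fun t => n * (t₀ - t) + 1, ?_, by simp, fun c => n * α + m * (c + 1 + n * t₀),
    n * α + m * (1 + n * t₀), ?_⟩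
  · rw [card_image_of_injOn, hTcard]
    intro t ht u hu htu
    have := Nat.eq_of_mul_eq_mul_left hn (Nat.add_right_cancel htu)
    have := ht₀ ht
    have := ht₀ hu
    omega
  · rintro v ⟨hvV, hvs⟩ hvC
    obtain ⟨w, hw⟩ := (Nat.modEq_iff_dvd' (le_of_add_le_left hvC)).1 (hα.trans hvs.symm)
    have hv : v = n * α + m * w := by omega
    have hw₀ : 1 + n * t₀ ≤ w := le_of_mul_le_mul_left (by omega) hm
    obtain ⟨c, rfl⟩ := Nat.exists_eq_add_of_le' hw₀
    have hcv : c ≤ v := by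
      rw [hv]
      exact le_add_left ((Nat.le_add_right c _).trans (Nat.le_mul_of_pos_left _ hm))
    refine ⟨c, le_add_right hcv, by rw [hv]; ring, ?_⟩
    simp only [mem_image, forall_exists_index, and_imp]
    rintro _ t ht rfl hb
    obtain ⟨d, hd⟩ := Nat.exists_eq_add_of_le (ht₀ ht)
    refine hvV ⟨α + m * t, hTA ht, n * (t₀ - t) + 1 + c, hb, ?_⟩
    rw [hv, hd, Nat.add_sub_cancel_left]
    ring

theorem hasDensityZero_compl_mul_sub_mul_modEq (hA : ClassicalNormalSet A) (hn : 0 < n)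
    (hm : 0 < m) (hco : n.Coprime m) (s : ℕ) :
    HasDensityZero
      {v | (¬∃ a ∈ A, ∃ b ∈ A, m * b < n * a ∧ v = n * a - m * b) ∧ v ≡ s [MOD n]} := by
  obtain ⟨β, -, hβ⟩ := Nat.exists_mul_mod_eq_of_coprime ((n - 1) * s) hco.symm hn.ne'
  refine hA.hasDensityZero_of_forall_exists_avoid fun J => ?_
  obtain ⟨T, hTA, hTcard⟩ := (hA.infinite_setOf_add_mul_mem β hn).exists_subset_card_eq J
  refine ⟨T.image fun t => m * t + 1, ?_, by simp, fun c => n * (c + 1) - m * β, m * β + 1, ?_⟩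
  · rw [card_image_of_injOn fun t _ u _ htu => Nat.eq_of_mul_eq_mul_left hm
      (Nat.add_right_cancel htu), hTcard]
  · rintro v ⟨hvV, hvs⟩ hvC
    have hdvd : v + m * β ≡ 0 [MOD n] := by
      refine (hvs.add hβ).trans (Nat.modEq_zero_iff_dvd.2 ⟨s, ?_⟩)
      have := Nat.le_mul_of_pos_left s hn
      rw [Nat.sub_one_mul]
      omega
    obtain ⟨w, hw⟩ := Nat.modEq_zero_iff_dvd.1 hdvd
    obtain ⟨c, rfl⟩ : ∃ c, w = c + 1 := Nat.exists_eq_succ_of_ne_zero (by rintro rfl; omega)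
    have hcv : c + 1 ≤ v + m * β := hw ▸ Nat.le_mul_of_pos_left _ hn
    refine ⟨c, by omega, show n * (c + 1) - m * β = v by omega, ?_⟩
    simp only [mem_image, forall_exists_index, and_imp]
    rintro _ t ht rfl ha
    have hna : n * (m * t + 1 + c) = v + m * (β + n * t) := by linarith
    exact hvV ⟨m * t + 1 + c, ha, β + n * t, hTA ht, by omega, by omega⟩

end ClassicalNormalSet

theorem nA_pm_mA_density_one
    (A : Set ℕ) (hA : ClassicalNormalSet A)
    (n m : ℕ) (hn : 0 < n) (hm : 0 < m) (hco : Nat.Coprime n m) :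
    HasDensityOne {v : ℕ | ∃ a ∈ A, ∃ b ∈ A, v = n * a + m * b} ∧
    HasDensityOne {v : ℕ | ∃ a ∈ A, ∃ b ∈ A, m * b < n * a ∧ v = n * a - m * b} :=
  ⟨hasDensityOne_of_hasDensityZero_compl <| HasDensityZero.of_forall_modEq hm fun s _ =>
      hA.hasDensityZero_compl_mul_add_mul_modEq hn hm hco s,
    hasDensityOne_of_hasDensityZero_compl <| HasDensityZero.of_forall_modEq hn fun s _ =>
      hA.hasDensityZero_compl_mul_sub_mul_modEq hn hm hco s⟩
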